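/- arXiv:hep-th/0508084 — 2 statements merged into one kernel-verified Lean document; each statement's English description precedes it below -/
import Mathlib

section
/- Let K be a free abelian group. Then there is an exact sequence of abelian groups 0 → H^0(Z; K) → C(Z, K ⊗ ℝ) → C(Z, K ⊗ (ℝ/ℤ)) → H^1(Z; K) → 0, for any compact Hausdorff space Z homotopy equivalent to a finite CW complex, where the middle map is induced by the quotient ℝ → ℝ/ℤ and the last map sends a continuous function to its homotopy class under the identification H^1(Z; K) ≅ [Z, K ⊗ ℝ/ℤ]. -/
/-!
`ℝ → ℝ/ℤ` is a covering map, so by homotopy lifting a map `Z → (ℝ/ℤ)^ι` lifts to `ℝ^ι` as soon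
as it is nullhomotopic; conversely every map factoring through the contractible `ℝ^ι` is
nullhomotopic. A map `Z → ℝ^ι` dies in the torus iff its coordinates are integers, and a
continuous map into the discrete group `ℤ^ι` (`ι` finite) is locally constant.
-/

open scoped ContinuousMap

/-! Reconstruction of the (December 2024) Mathlib definitions of `Mathlib.Topology.CWComplex`,
which have since been removed from Mathlib. -/

universe u

open CategoryTheory

namespace RelativeCWComplex

/-- The `n`-dimensional sphere is the set of points in ℝⁿ⁺¹ whose norm equals `1`,
endowed with the subspace topology. -/
noncomputable def sphere (n : ℤ) : TopCat.{u} :=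
  TopCat.of <| ULift <| Metric.sphere (0 : EuclideanSpace ℝ <| Fin <| Int.toNat <| n + 1) 1

/-- The `n`-dimensional closed disk is the set of points in ℝⁿ whose norm is at most `1`,
endowed with the subspace topology. -/
noncomputable def disk (n : ℤ) : TopCat.{u} :=
  TopCat.of <| ULift <| Metric.closedBall (0 : EuclideanSpace ℝ <| Fin <| Int.toNat n) 1

/-- The inclusion map from the `n`-sphere to the `(n + 1)`-disk. -/
noncomputable def sphereInclusion (n : ℤ) : sphere.{u} n ⟶ disk.{u} (n + 1) :=
  TopCat.ofHom
    { toFun := fun p => ⟨⟨p.down.1, Metric.sphere_subset_closedBall p.down.2⟩⟩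
      continuous_toFun := continuous_uliftUp.comp
        ((continuous_subtype_val.comp continuous_uliftDown).subtype_mk _) }

/-- The inclusion map from the disjoint union of `n`-spheres to the disjoint union of
`(n + 1)`-disks. -/
noncomputable def sigmaSphereInclusion (n : ℤ) (cells : Type u) :
    TopCat.of (Σ (_ : cells), sphere.{u} n) ⟶ TopCat.of (Σ (_ : cells), disk.{u} (n + 1)) :=
  TopCat.ofHom
    { toFun := Sigma.map id fun _ x => sphereInclusion.{u} n x
      continuous_toFun := Continuous.sigma_map fun _ => (sphereInclusion.{u} n).hom.continuous }

/-- Given an attaching map for each `n`-sphere, the attaching map of their disjoint union. -/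
noncomputable def sigmaAttachMap (X : TopCat.{u}) (n : ℤ) (cells : Type u)
    (attachMaps : cells → C(sphere.{u} n, X)) : TopCat.of (Σ (_ : cells), sphere.{u} n) ⟶ X :=
  TopCat.ofHom
    { toFun := fun x => attachMaps x.1 x.2
      continuous_toFun := continuous_sigma fun i => (attachMaps i).continuous }

/-- A type witnessing that `X'` is obtained from `X` by attaching `(n + 1)`-disks. -/
structure AttachCells (X X' : TopCat.{u}) (n : ℤ) where
  /-- The index type over the `(n + 1)`-disks. -/
  cells : Type u
  /-- The attaching maps. -/
  attachMaps : cells → C(sphere.{u} n, X)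
  /-- `X'` is the pushout of `∐ S(n) ⟶ X` and `∐ S(n) ⟶ ∐ D(n + 1)`. -/
  iso_pushout : X' ≅ Limits.pushout (sigmaSphereInclusion n cells)
    (sigmaAttachMap X n cells attachMaps)

end RelativeCWComplex

/-- A relative CW-complex: `sk 0 ≅ A`, and `sk (n + 1)` is obtained from `sk n` by attaching
`n`-disks. -/
structure RelativeCWComplex (A : TopCat.{u}) where
  /-- The skeletons (`sk i` is the `(i-1)`-skeleton). -/
  sk : ℕ → TopCat.{u}
  /-- `sk 0` is `A`. -/
  isoSkZero : sk 0 ≅ A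
  /-- `sk (n + 1)` is obtained from `sk n` by attaching `n`-disks. -/
  attachCells (n : ℕ) : RelativeCWComplex.AttachCells (sk n) (sk (n + 1)) ((n : ℤ) - 1)

/-- A CW-complex is a relative CW-complex whose `(-1)`-skeleton is empty. -/
abbrev CWComplex := RelativeCWComplex.{u} (TopCat.of PEmpty)

namespace RelativeCWComplex

/-- The inclusion `X ⟶ X'` when `X'` is obtained from `X` by attaching cells. -/
noncomputable def AttachCells.inclusion (X X' : TopCat.{u}) (n : ℤ) (att : AttachCells X X' n) :
    X ⟶ X' :=
  Limits.pushout.inr _ _ ≫ att.iso_pushout.inv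

/-- The inclusion of the skeletons. -/
noncomputable def skInclusion {A : TopCat.{u}} (X : RelativeCWComplex A) (n : ℕ) :
    X.sk n ⟶ X.sk (n + 1) :=
  AttachCells.inclusion (X.sk n) (X.sk (n + 1)) ((n : ℤ) - 1) (X.attachCells n)

/-- The topological space underlying a relative CW-complex: the colimit of its skeletons. -/
noncomputable def toTopCat {A : TopCat.{u}} (X : RelativeCWComplex A) : TopCat.{u} :=
  Limits.colimit (Functor.ofSequence (skInclusion X))

end RelativeCWComplex

/-- A CW-complex (in the sense of `Mathlib.Topology.CWComplex`) is *finite* if it has finitely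
many cells in each dimension and no cells above some dimension. -/
def CWComplex.IsFinite (W : CWComplex.{0}) : Prop :=
  (∀ n, Finite (W.attachCells n).cells) ∧
    ∃ N, ∀ n, N ≤ n → IsEmpty (W.attachCells n).cells

/-- `Z` has the homotopy type of a finite CW complex. -/
def HasFiniteCWHomotopyType (Z : Type) [TopologicalSpace Z] : Prop :=
  ∃ W : CWComplex.{0}, W.IsFinite ∧
    Nonempty (ContinuousMap.HomotopyEquiv Z W.toTopCat)

theorem IsCoveringMap.exists_lift_of_homotopic {E X A : Type*} [TopologicalSpace E]
    [TopologicalSpace X] [TopologicalSpace A] {p : E → X} (cov : IsCoveringMap p)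
    {f₀ f₁ : C(A, X)} (hf : f₀.Homotopic f₁) {g₀ : C(A, E)} (hg₀ : p ∘ g₀ = f₀) :
    ∃ g₁ : C(A, E), p ∘ g₁ = f₁ := by
  obtain ⟨F⟩ := hf
  let G := cov.liftHomotopy F.toContinuousMap g₀ fun a => by simp [← hg₀]
  refine ⟨G.comp (.prodMk (.const A 1) (.id A)), funext fun a => ?_⟩
  simpa using congr_fun (cov.liftHomotopy_lifts F.toContinuousMap g₀ _) (1, a)

namespace AddCircle

variable {Z ι : Type*} [TopologicalSpace Z] (p : ℝ)

theorem exists_pi_lift_iff_homotopic_zero (h : C(Z, ι → AddCircle p)) :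
    (∃ g : C(Z, ι → ℝ), ∀ z i, (g z i : AddCircle p) = h z i) ↔ h.Homotopic 0 := by
  constructor
  · rintro ⟨g, hg⟩
    let π : C(ι → ℝ, ι → AddCircle p) :=
      ⟨fun x i => x i, continuous_pi fun i => continuous_quotient_mk'.comp (continuous_apply i)⟩
    have hπg : π.comp g = h := by ext z i; exact hg z i
    have hπ0 : π.comp (0 : C(Z, ι → ℝ)) = 0 := by ext z i; rfl
    rw [← hπg, ← hπ0]
    exact (ContinuousMap.Homotopic.refl π).comp ⟨ContinuousMap.Homotopy.affine g 0⟩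
  · intro hh
    have hlift : ∀ i, ∃ gi : C(Z, ℝ),
        ((↑) : ℝ → AddCircle p) ∘ gi = (ContinuousMap.eval i).comp h :=
      fun i => (isCoveringMap_coe p).exists_lift_of_homotopic
        ((ContinuousMap.Homotopic.refl (ContinuousMap.eval i)).comp hh).symm
        (g₀ := 0) (by ext; rfl)
    choose g hg using hlift
    exact ⟨ContinuousMap.pi g, fun z i => congr_fun (hg i) z⟩

theorem exists_locallyConstant_lift_iff [Finite ι] (g : C(Z, ι → ℝ)) :
    (∃ f : LocallyConstant Z (ι → ℤ), ∀ z i, (f z i : ℝ) = g z i) ↔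
      ∀ z i, (g z i : AddCircle (1 : ℝ)) = 0 := by
  constructor
  · rintro ⟨f, hf⟩ z i
    rw [← hf, coe_eq_zero_iff]
    exact ⟨f z i, by simp⟩
  · intro hg
    have hint : ∀ z i, ∃ n : ℤ, (n : ℝ) = g z i := fun z i => by
      simpa using (coe_eq_zero_iff 1).1 (hg z i)
    choose f hf using hint
    have hcont : Continuous f := by
      refine continuous_pi fun i => ?_
      refine Int.isClosedEmbedding_coe_real.isEmbedding.continuous_iff.2 ?_
      simpa [Function.comp_def, hf] using (continuous_apply i).comp g.continuous
    exact ⟨⟨f, (IsLocallyConstant.iff_continuous f).2 hcont⟩, hf⟩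

end AddCircle

theorem exact_sequence_locallyConstant_to_H1_general
    (ι : Type) [Finite ι] (Z : Type) [TopologicalSpace Z]
    -- the map `H⁰(Z; K) = LocallyConstant Z K → C(Z, K ⊗ ℝ)`
    (j : LocallyConstant Z (ι → ℤ) → C(Z, ι → ℝ))
    (hj : ∀ f z i, j f z i = ((f z i : ℤ) : ℝ))
    -- the map `C(Z, K ⊗ ℝ) → C(Z, K ⊗ ℝ/ℤ)` induced by the quotient `ℝ → ℝ/ℤ`
    (q : C(Z, ι → ℝ) → C(Z, ι → AddCircle (1 : ℝ)))
    (hq : ∀ g z i, q g z i = ((g z i : ℝ) : AddCircle (1 : ℝ))) :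
    -- exactness at `H⁰(Z; K)`: injectivity
    Function.Injective j ∧
    -- exactness at `C(Z, K ⊗ ℝ)`: `range j = ker q`
    (∀ g : C(Z, ι → ℝ), (∃ f, j f = g) ↔ q g = 0) ∧
    -- exactness at `C(Z, K ⊗ ℝ/ℤ)`: the image of `q` consists exactly of the functions whose
    -- homotopy class in `H¹(Z; K) = [Z, K ⊗ ℝ/ℤ]` is trivial
    (∀ h : C(Z, ι → AddCircle (1 : ℝ)),
      (∃ g, q g = h) ↔ ContinuousMap.Homotopic h 0) ∧
    -- exactness at `H¹(Z; K)`: surjectivity of `C(Z, K ⊗ ℝ/ℤ) → [Z, K ⊗ ℝ/ℤ]`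
    Function.Surjective
      (Quotient.mk (⟨ContinuousMap.Homotopic, ContinuousMap.Homotopic.equivalence⟩ :
        Setoid C(Z, ι → AddCircle (1 : ℝ)))) := by
  refine ⟨fun f f' hff => ?_, fun g => ?_, fun h => ?_, Quotient.mk_surjective⟩
  · ext z i
    simpa [hj] using congr_fun (DFunLike.congr_fun hff z) i
  · have hker : q g = 0 ↔ ∀ z i, (g z i : AddCircle (1 : ℝ)) = 0 := by
      simp [ContinuousMap.ext_iff, funext_iff, hq]
    rw [hker, ← AddCircle.exists_locallyConstant_lift_iff]
    simp [ContinuousMap.ext_iff, funext_iff, hj]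
  · rw [← AddCircle.exists_pi_lift_iff_homotopic_zero]
    simp [ContinuousMap.ext_iff, funext_iff, hq]

/-- Let `K` be a (finite-rank) free abelian group, realized as `ι → ℤ` for a
finite basis-index `ι`, so that `K ⊗ ℝ = ι → ℝ` and `K ⊗ ℝ/ℤ = ι → ℝ/ℤ`.  For `Z` a compact
Hausdorff space of the homotopy type of a finite CW complex, the sequence
`0 → H⁰(Z; K) → C(Z, K ⊗ ℝ) → C(Z, K ⊗ ℝ/ℤ) → H¹(Z; K) → 0`
is exact, where `H⁰(Z; K)` is identified with the locally constant `K`-valued functions, the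
middle map is induced by the quotient `ℝ → ℝ/ℤ`, and `H¹(Z; K)` is identified with the set
`[Z, K ⊗ ℝ/ℤ]` of homotopy classes, the last map sending a function to its homotopy class. -/
theorem exact_sequence_locallyConstant_to_H1
    (ι : Type) [Finite ι] (Z : Type) [TopologicalSpace Z] [CompactSpace Z] [T2Space Z]
    (hZ : HasFiniteCWHomotopyType Z)
    -- the map `H⁰(Z; K) = LocallyConstant Z K → C(Z, K ⊗ ℝ)`
    (j : LocallyConstant Z (ι → ℤ) → C(Z, ι → ℝ))
    (hj : ∀ f z i, j f z i = ((f z i : ℤ) : ℝ))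
    -- the map `C(Z, K ⊗ ℝ) → C(Z, K ⊗ ℝ/ℤ)` induced by the quotient `ℝ → ℝ/ℤ`
    (q : C(Z, ι → ℝ) → C(Z, ι → AddCircle (1 : ℝ)))
    (hq : ∀ g z i, q g z i = ((g z i : ℝ) : AddCircle (1 : ℝ))) :
    -- exactness at `H⁰(Z; K)`: injectivity
    Function.Injective j ∧
    -- exactness at `C(Z, K ⊗ ℝ)`: `range j = ker q`
    (∀ g : C(Z, ι → ℝ), (∃ f, j f = g) ↔ q g = 0) ∧
    -- exactness at `C(Z, K ⊗ ℝ/ℤ)`: the image of `q` consists exactly of the functions whose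
    -- homotopy class in `H¹(Z; K) = [Z, K ⊗ ℝ/ℤ]` is trivial
    (∀ h : C(Z, ι → AddCircle (1 : ℝ)),
      (∃ g, q g = h) ↔ ContinuousMap.Homotopic h 0) ∧
    -- exactness at `H¹(Z; K)`: surjectivity of `C(Z, K ⊗ ℝ/ℤ) → [Z, K ⊗ ℝ/ℤ]`
    Function.Surjective
      (Quotient.mk (⟨ContinuousMap.Homotopic, ContinuousMap.Homotopic.equivalence⟩ :
        Setoid C(Z, ι → AddCircle (1 : ℝ)))) :=
  exact_sequence_locallyConstant_to_H1_general ι Z j hj q hq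
end

section
/- The second group cohomology of ℤ^n with coefficients in the circle group ℝ/ℤ (trivial action) is isomorphic to Λ^2(ℤ^n)^* ⊗ (ℝ/ℤ) ≅ (ℝ/ℤ)^{binomial(n,2)}. -/
/-!
For `G = ℤⁿ` acting trivially on `A`, the commutator `f (g, h) - f (h, g)` of a 2-cocycle `f` is
an alternating bi-additive form, and it vanishes on coboundaries. Conversely, if it vanishes then
`f` is symmetric, so the extension of `ℤⁿ` by `A` defined by `f` is abelian, and it splits because
`ℤⁿ` is free: `f` is a coboundary. Every value `β (i, j)`, `i < j`, of the commutator on basis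
vectors is attained by the bilinear cocycle `∑_{i<j} xᵢ yⱼ β (i, j)`. Hence `H²(ℤⁿ, A)` is
`A ^ (n choose 2)`, which is also `Λ²(ℤⁿ)* ⊗ A` because `Λ²(ℤⁿ)` is free of rank `n choose 2`.
-/

open groupCohomology

universe u

section Commutator

variable {k G : Type u} {A : Type*} [AddCommGroup A]

def cocycleCommutator (f : G × G → A) (g h : G) : A := f (g, h) - f (h, g)

lemma cocycleCommutator_swap (f : G × G → A) (g h : G) :
    cocycleCommutator f h g = -cocycleCommutator f g h :=
  (neg_sub _ _).symm

lemma cocycleCommutator_self (f : G × G → A) (g : G) : cocycleCommutator f g g = 0 :=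
  sub_self _

variable [CommRing k] [CommGroup G] [Module k A]

lemma cocycles₂_trivial_identity (f : cocycles₂ (Rep.trivial k G A)) (g h j : G) :
    f (g * h, j) + f (g, h) = f (h, j) + f (g, h * j) :=
  (mem_cocycles₂_iff f).1 f.2 g h j

lemma cocycleCommutator_mul_right (f : cocycles₂ (Rep.trivial k G A)) (g h j : G) :
    cocycleCommutator f g (h * j) = cocycleCommutator f g h + cocycleCommutator f g j := by
  have hghj := cocycles₂_trivial_identity f g h j
  have hhjg := cocycles₂_trivial_identity f h j g
  have hhgj := cocycles₂_trivial_identity f h g j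
  rw [mul_comm j g] at hhjg
  rw [mul_comm h g] at hhgj
  unfold cocycleCommutator
  linear_combination (norm := abel) hhgj - hghj - hhjg

lemma cocycleCommutator_mul_left (f : cocycles₂ (Rep.trivial k G A)) (g h j : G) :
    cocycleCommutator f (g * h) j = cocycleCommutator f g j + cocycleCommutator f h j := by
  rw [cocycleCommutator_swap, cocycleCommutator_mul_right, neg_add,
    ← cocycleCommutator_swap, ← cocycleCommutator_swap]

lemma cocycleCommutator_eq_zero_of_mem_coboundaries₂ {f : G × G → A}
    (hf : f ∈ coboundaries₂ (Rep.trivial k G A)) (g h : G) : cocycleCommutator f g h = 0 := by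
  obtain ⟨x, rfl⟩ := hf
  show (x h - x (g * h) + x g) - (x g - x (h * g) + x h) = 0
  rw [mul_comm h g]
  abel

end Commutator

section SplitExtension

variable {V M : Type*} [AddCommGroup V] [AddCommGroup M]

def CocycleExt (_f : V → V → M) : Type _ := M × V

/-- As `f` need not be normalized, the zero is `(-f 0 0, 0)`. -/
abbrev CocycleExt.addCommGroup (f : V → V → M)
    (hf : ∀ x y z, f (x + y) z + f x y = f y z + f x (y + z)) (hsymm : ∀ x y, f x y = f y x) :
    AddCommGroup (CocycleExt f) :=
  have hf0 (y : V) : f 0 y = f 0 0 := by simpa using (hf 0 0 y).symm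
  letI : Add (CocycleExt f) := ⟨fun a b => (a.1 + b.1 + f a.2 b.2, a.2 + b.2)⟩
  letI : Zero (CocycleExt f) := ⟨(-f 0 0, 0)⟩
  letI : Neg (CocycleExt f) := ⟨fun a => (-a.1 - f a.2 (-a.2) - f 0 0, -a.2)⟩
  { nsmul := nsmulRec
    zsmul := zsmulRec
    add_assoc := fun a b c => Prod.ext (by
        show a.1 + b.1 + f a.2 b.2 + c.1 + f (a.2 + b.2) c.2
          = a.1 + (b.1 + c.1 + f b.2 c.2) + f a.2 (b.2 + c.2)
        linear_combination (norm := abel) hf a.2 b.2 c.2)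
      (add_assoc a.2 b.2 c.2)
    zero_add := fun a => Prod.ext (by
        show -f 0 0 + a.1 + f 0 a.2 = a.1
        rw [hf0 a.2]
        abel)
      (zero_add a.2)
    add_zero := fun a => Prod.ext (by
        show a.1 + -f 0 0 + f a.2 0 = a.1
        rw [hsymm a.2 0, hf0 a.2]
        abel)
      (add_zero a.2)
    neg_add_cancel := fun a => Prod.ext (by
        show -a.1 - f a.2 (-a.2) - f 0 0 + a.1 + f (-a.2) a.2 = -f 0 0
        rw [hsymm (-a.2)]
        abel)
      (neg_add_cancel a.2)
    add_comm := fun a b => Prod.ext (by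
        show a.1 + b.1 + f a.2 b.2 = b.1 + a.1 + f b.2 a.2
        rw [hsymm]
        abel)
      (add_comm a.2 b.2) }

/-- The extension `CocycleExt f` of the projective module `V` splits; a section `s` gives
`φ = -(s ·).1`. -/
theorem exists_eq_coboundary_of_symm [Module.Projective ℤ V] (f : V → V → M)
    (hf : ∀ x y z, f (x + y) z + f x y = f y z + f x (y + z)) (hsymm : ∀ x y, f x y = f y x) :
    ∃ φ : V → M, ∀ x y, f x y = φ x + φ y - φ (x + y) := by
  let _ := CocycleExt.addCommGroup f hf hsymm
  let π : CocycleExt f →ₗ[ℤ] V :=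
    (AddMonoidHom.mk' (fun a : CocycleExt f => a.2) fun _ _ => rfl).toIntLinearMap
  obtain ⟨s, hs⟩ := Module.projective_lifting_property π LinearMap.id fun x => ⟨(0, x), rfl⟩
  have hsnd (x : V) : (s x).2 = x := LinearMap.congr_fun hs x
  refine ⟨fun x => -(s x).1, fun x y => ?_⟩
  have hadd : (s (x + y)).1 = (s x).1 + (s y).1 + f (s x).2 (s y).2 :=
    congrArg Prod.fst (map_add s x y)
  show f x y = -(s x).1 + -(s y).1 - -(s (x + y)).1
  rw [hadd, hsnd, hsnd]
  abel

end SplitExtension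

section AdditiveGroup

open Multiplicative

variable {k V : Type u} {A : Type*} [CommRing k] [AddCommGroup V] [AddCommGroup A] [Module k A]

theorem mem_coboundaries₂_of_symm [Module.Projective ℤ V]
    (f : cocycles₂ (Rep.trivial k (Multiplicative V) A)) (hsymm : ∀ g h, f (g, h) = f (h, g)) :
    ⇑f ∈ coboundaries₂ (Rep.trivial k (Multiplicative V) A) := by
  obtain ⟨φ, hφ⟩ := exists_eq_coboundary_of_symm (fun x y => f (ofAdd x, ofAdd y))
    (fun _ _ _ => cocycles₂_trivial_identity f _ _ _) (fun _ _ => hsymm _ _)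
  refine ⟨fun g => φ g.toAdd, funext fun ⟨g, h⟩ => ?_⟩
  show φ h.toAdd - φ (g.toAdd + h.toAdd) + φ g.toAdd = f (ofAdd g.toAdd, ofAdd h.toAdd)
  rw [hφ]
  abel

lemma mem_cocycles₂_of_biadditive (F : V → V → A)
    (hl : ∀ x y z, F (x + y) z = F x z + F y z) (hr : ∀ x y z, F x (y + z) = F x y + F x z) :
    (fun g : Multiplicative V × Multiplicative V => F g.1.toAdd g.2.toAdd) ∈
      cocycles₂ (Rep.trivial k (Multiplicative V) A) := by
  refine (mem_cocycles₂_iff _).2 fun g h j => ?_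
  show F (g.toAdd + h.toAdd) j.toAdd + F g.toAdd h.toAdd
    = F h.toAdd j.toAdd + F g.toAdd (h.toAdd + j.toAdd)
  rw [hl, hr]
  abel

end AdditiveGroup

section PiInt

open Multiplicative

variable {k ι : Type u} {A : Type*} [CommRing k] [Fintype ι] [DecidableEq ι]
  [AddCommGroup A] [Module k A]

lemma cocycleCommutator_eq_zero_of_single
    (f : cocycles₂ (Rep.trivial k (Multiplicative (ι → ℤ)) A))
    (h : ∀ i j, cocycleCommutator f (ofAdd (Pi.single i 1)) (ofAdd (Pi.single j 1)) = 0)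
    (g g' : Multiplicative (ι → ℤ)) : cocycleCommutator f g g' = 0 := by
  let B : (ι → ℤ) →+ (ι → ℤ) →+ A :=
    AddMonoidHom.mk' (fun x => AddMonoidHom.mk' (fun y => cocycleCommutator f (ofAdd x) (ofAdd y))
      fun _ _ => cocycleCommutator_mul_right f _ _ _)
      fun _ _ => AddMonoidHom.ext fun _ => cocycleCommutator_mul_left f _ _ _
  have hB : B = 0 := by
    ext i j
    exact h i j
  exact DFunLike.congr_fun (DFunLike.congr_fun hB g.toAdd) g'.toAdd

variable [LinearOrder ι]

variable (k ι A) in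
def commutatorCoords :
    cocycles₂ (Rep.trivial k (Multiplicative (ι → ℤ)) A) →ₗ[k] ({p : ι × ι // p.1 < p.2} → A) where
  toFun f p := cocycleCommutator f (ofAdd (Pi.single p.1.1 1)) (ofAdd (Pi.single p.1.2 1))
  map_add' _ _ := funext fun _ => add_sub_add_comm _ _ _ _
  map_smul' c _ := funext fun _ => (smul_sub c _ _).symm

theorem commutatorCoords_surjective : Function.Surjective (commutatorCoords k ι A) := by
  intro β
  let β' (a b : ι) : A := if h : a < b then β ⟨(a, b), h⟩ else 0
  let F (x y : ι → ℤ) : A := ∑ a, ∑ b, (x a * y b) • β' a b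
  have hF (i j : ι) : F (Pi.single i 1) (Pi.single j 1) = β' i j := by
    simp [F, Pi.single_apply]
  refine ⟨⟨_, mem_cocycles₂_of_biadditive F ?_ ?_⟩, funext fun p => ?_⟩
  · intro x y z
    simp [F, add_mul, add_smul, Finset.sum_add_distrib]
  · intro x y z
    simp [F, mul_add, add_smul, Finset.sum_add_distrib]
  · show F (Pi.single p.1.1 1) (Pi.single p.1.2 1) - F (Pi.single p.1.2 1) (Pi.single p.1.1 1)
      = β p
    rw [hF, hF]
    simp [β', p.2, p.2.le]

theorem commutatorCoords_eq_zero_iff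
    (f : cocycles₂ (Rep.trivial k (Multiplicative (ι → ℤ)) A)) :
    commutatorCoords k ι A f = 0 ↔
      ⇑f ∈ coboundaries₂ (Rep.trivial k (Multiplicative (ι → ℤ)) A) := by
  refine ⟨fun hf => mem_coboundaries₂_of_symm f fun g h => ?_,
    fun hf => funext fun _ => cocycleCommutator_eq_zero_of_mem_coboundaries₂ hf _ _⟩
  have hsingle (i j : ι) :
      cocycleCommutator f (ofAdd (Pi.single i 1)) (ofAdd (Pi.single j 1)) = 0 := by
    rcases lt_trichotomy i j with hij | rfl | hij
    · exact congrFun hf ⟨(i, j), hij⟩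
    · exact cocycleCommutator_self _ _
    · rw [cocycleCommutator_swap, neg_eq_zero]
      exact congrFun hf ⟨(j, i), hij⟩
  exact sub_eq_zero.1 (cocycleCommutator_eq_zero_of_single f hsingle g h)

variable (k ι) (A : Type u) [AddCommGroup A] [Module k A]

noncomputable def H2TrivialPiIntEquiv :
    H2 (Rep.trivial k (Multiplicative (ι → ℤ)) A) ≃ₗ[k] ({p : ι × ι // p.1 < p.2} → A) :=
  ((H2π _).hom.quotKerEquivOfSurjective
      ((ModuleCat.epi_iff_surjective _).1 inferInstance)).symm ≪≫ₗ
    Submodule.quotEquivOfEq _ _ (by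
      ext f
      rw [LinearMap.mem_ker, LinearMap.mem_ker, commutatorCoords_eq_zero_iff]
      exact H2π_eq_zero_iff f) ≪≫ₗ
    (commutatorCoords k ι A).quotKerEquivOfSurjective commutatorCoords_surjective

end PiInt

/-- The second group cohomology of `ℤⁿ` with coefficients in the circle group
`ℝ/ℤ` (trivial action) is isomorphic to `Λ²(ℤⁿ)* ⊗ (ℝ/ℤ) ≅ (ℝ/ℤ)^(binomial n 2)`.
(Group cohomology is taken with `ℤⁿ` acting trivially on `ℝ/ℤ`, viewed as a trivial
representation on the `ℤ`-module `ℝ/ℤ`.) -/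
theorem groupCohomology_two_zpow_circle (n : ℕ) :
    Nonempty ((groupCohomology (Rep.trivial ℤ (Multiplicative (Fin n → ℤ))
        (AddCircle (1 : ℝ))) 2) ≃+
        TensorProduct ℤ (Module.Dual ℤ (⋀[ℤ]^2 (Fin n → ℤ))) (AddCircle (1 : ℝ))) ∧
    Nonempty ((groupCohomology (Rep.trivial ℤ (Multiplicative (Fin n → ℤ))
        (AddCircle (1 : ℝ))) 2) ≃+
        (Fin (n.choose 2) → AddCircle (1 : ℝ))) := by
  have hcard : Fintype.card {p : Fin n × Fin n // p.1 < p.2} = n.choose 2 := by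
    rw [Fintype.card_subtype, Fintype.card_product_filter_lt, Fintype.card_fin]
  let eH := (H2TrivialPiIntEquiv ℤ (Fin n) (AddCircle (1 : ℝ))).trans
    (LinearEquiv.funCongrLeft ℤ (AddCircle (1 : ℝ)) (Fintype.equivFinOfCardEq hcard).symm)
  have hrank : Module.finrank ℤ (⋀[ℤ]^2 (Fin n → ℤ)) = n.choose 2 := by
    rw [exteriorPower.finrank_eq, Module.finrank_fin_fun]
  let b := Module.finBasisOfFinrankEq ℤ _ hrank
  let eT := (dualTensorHomEquivOfBasis b (N := AddCircle (1 : ℝ))).trans (b.constr ℤ).symm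
  exact ⟨⟨(eH.trans eT.symm).toAddEquiv⟩, ⟨eH.toAddEquiv⟩⟩
end
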